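/- Fix a symmetric matrix A ∈ ℝ^{n×n}, a scalar ρ ∈ ℝ, and a vector b ∈ ℝ^n. Let (λ₁, u₁) be the leading eigenpair of A (the eigenvalue of largest absolute value with a unit eigenvector u₁), and let Δ > 0 be the gap between the largest and the second largest singular value of A. Let ũ₁ be a unit leading eigenvector of A + ρ·bbᵀ. If |ρ|·‖b‖² ≤ Δ/4, then there is a sign s ∈ {±1} such that ‖u₁ − s·ũ₁‖ ≤ 2√2·|ρ|·‖b‖·|bᵀu₁|/Δ. -/

import Mathlib

/-
The spectral gap forces `u₁` onto the eigenvector line of index `i₀`, and the Rayleigh quotient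
of `u₁` for `A + ρ b bᵀ` shows that the perturbed leading eigenvalue `μ` satisfies
`|μ| ≥ |λ₁| - Δ/4`, so `μ` stays `3Δ/4` away from every other eigenvalue of `A`.
The part `w = ũ₁ - ⟪u₁, ũ₁⟫ u₁` of `ũ₁` orthogonal to `u₁` then lives on those eigenvectors, whence
`(3Δ/4) ‖w‖ ≤ ‖(A - μ) w‖ ≤ |ρ| |bᵀũ₁| ‖b‖ ≤ |ρ| ‖b‖ (|bᵀu₁| + ‖b‖ ‖w‖)`, and `|ρ| ‖b‖² ≤ Δ/4`
turns this into `‖w‖ ≤ 2 |ρ| ‖b‖ |bᵀu₁| / Δ`. Finally, with `s` the sign of `⟪u₁, ũ₁⟫`,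
`‖u₁ - s ũ₁‖² = 2 - 2 |⟪u₁, ũ₁⟫| ≤ 2 (1 - ⟪u₁, ũ₁⟫²) = 2 ‖w‖²`.
-/

open Matrix

/-- Euclidean norm of a vector in `ℝ^k`. -/
noncomputable def eucNorm {k : ℕ} (v : Fin k → ℝ) : ℝ := Real.sqrt (∑ i, (v i) ^ 2)

/-- `u` is a unit leading eigenvector of the (symmetric) matrix `M`: a unit eigenvector
whose eigenvalue has the largest absolute value among all eigenvalues of `M`. -/
def IsLeadingEigen {n : ℕ} (M : Matrix (Fin n) (Fin n) ℝ) (u : Fin n → ℝ) : Prop :=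
  eucNorm u = 1 ∧ ∃ μ : ℝ, M.mulVec u = μ • u ∧
    ∀ μ' : ℝ, (∃ w : Fin n → ℝ, w ≠ 0 ∧ M.mulVec w = μ' • w) → |μ'| ≤ |μ|

open scoped RealInnerProductSpace

open WithLp

section OrthonormalBasis

variable {ι E : Type*} [Fintype ι] [NormedAddCommGroup E] [InnerProductSpace ℝ E]
  {T : E →ₗ[ℝ] E} {e : OrthonormalBasis ι ℝ E} {L : ι → ℝ}

lemma inner_basis_eq_zero_of_inner_eq_zero {i₀ : ι} {u w : E} (hu₀ : u ≠ 0)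
    (hu : ∀ i ≠ i₀, ⟪e i, u⟫ = 0) (huw : ⟪u, w⟫ = 0) : ⟪e i₀, w⟫ = 0 := by
  have hui₀ : ⟪u, e i₀⟫ ≠ 0 := fun h => hu₀ <| e.toBasis.ext_elem fun i => by
    rcases eq_or_ne i i₀ with rfl | hi
    · simp [e.coe_toBasis_repr_apply, e.repr_apply_apply, real_inner_comm, h]
    · simp [e.coe_toBasis_repr_apply, e.repr_apply_apply, hu i hi]
  rw [← e.sum_inner_mul_inner, Finset.sum_eq_single i₀ (fun i _ hi => by
    rw [real_inner_comm, hu i hi, zero_mul]) (by simp)] at huw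
  exact (mul_eq_zero.1 huw).resolve_left hui₀

lemma inner_eigenbasis_apply (hT : T.IsSymmetric) (he : ∀ i, T (e i) = L i • e i)
    (i : ι) (x : E) : ⟪e i, T x⟫ = L i * ⟪e i, x⟫ := by
  rw [← hT, he, real_inner_smul_left]

lemma inner_eigenbasis_eq_zero_of_apply_eq_smul (hT : T.IsSymmetric)
    (he : ∀ i, T (e i) = L i • e i) {lam : ℝ} {x : E} (hx : T x = lam • x) {i : ι}
    (hi : L i ≠ lam) : ⟪e i, x⟫ = 0 := by
  have h := inner_eigenbasis_apply hT he i x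
  rw [hx, real_inner_smul_right] at h
  exact (mul_eq_mul_right_iff.1 h.symm).resolve_left hi

lemma abs_inner_apply_self_le (hT : T.IsSymmetric) (he : ∀ i, T (e i) = L i • e i) {r : ℝ}
    (hL : ∀ i, |L i| ≤ r) (x : E) : |⟪x, T x⟫| ≤ r * ‖x‖ ^ 2 := by
  rw [← e.sum_inner_mul_inner, ← e.sum_sq_inner_right, Finset.mul_sum]
  refine (Finset.abs_sum_le_sum_abs _ _).trans (Finset.sum_le_sum fun i _ => ?_)
  rw [inner_eigenbasis_apply hT he, real_inner_comm, ← mul_assoc, mul_comm _ (L i), mul_assoc,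
    ← sq, abs_mul, abs_sq]
  exact mul_le_mul_of_nonneg_right (hL i) (sq_nonneg _)

lemma mul_norm_le_norm_apply_sub_smul (hT : T.IsSymmetric) (he : ∀ i, T (e i) = L i • e i)
    {μ δ : ℝ} (hδ : 0 ≤ δ) {x : E} (hx : ∀ i, ⟪e i, x⟫ ≠ 0 → δ ≤ |L i - μ|) :
    δ * ‖x‖ ≤ ‖T x - μ • x‖ := by
  refine (sq_le_sq₀ (by positivity) (norm_nonneg _)).1 ?_
  rw [mul_pow, ← e.sum_sq_inner_right, ← e.sum_sq_inner_right, Finset.mul_sum]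
  refine Finset.sum_le_sum fun i _ => ?_
  rw [inner_sub_right, inner_eigenbasis_apply hT he, real_inner_smul_right, ← sub_mul, mul_pow]
  by_cases hi : ⟪e i, x⟫ = 0
  · simp [hi]
  · rw [← sq_abs (L i - μ)]
    gcongr
    exact hx i hi

end OrthonormalBasis

section InnerProductSpace

variable {E : Type*} [NormedAddCommGroup E] [InnerProductSpace ℝ E]

lemma norm_le_of_eq_add_smul_of_inner_eq_zero {z v u : E} {c : ℝ} (hz : z = v + c • u)
    (hzu : ⟪u, z⟫ = 0) : ‖z‖ ≤ ‖v‖ := by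
  have h : ‖z‖ ^ 2 ≤ ‖z‖ * ‖v‖ := by
    rw [← real_inner_self_eq_norm_sq]
    nth_rw 2 [hz]
    rw [inner_add_right, real_inner_smul_right, real_inner_comm u z, hzu, mul_zero, add_zero]
    exact real_inner_le_norm z v
  rcases (norm_nonneg z).eq_or_lt with h0 | h0
  · rw [← h0]; exact norm_nonneg v
  · nlinarith

lemma exists_sign_norm_sub_le {x y : E} (hx : ‖x‖ = 1) (hy : ‖y‖ = 1) :
    ∃ s : ℝ, (s = 1 ∨ s = -1) ∧ ‖x - s • y‖ ≤ √2 * ‖y - ⟪x, y⟫ • x‖ := by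
  set χ := ⟪x, y⟫
  have hχ : |χ| ≤ 1 := by simpa [hx, hy] using abs_real_inner_le_norm x y
  obtain ⟨s, hs, hsχ⟩ : ∃ s : ℝ, (s = 1 ∨ s = -1) ∧ s * χ = |χ| := by
    rcases le_total 0 χ with h | h
    · exact ⟨1, .inl rfl, by rw [one_mul, abs_of_nonneg h]⟩
    · exact ⟨-1, .inr rfl, by rw [abs_of_nonpos h]; ring⟩
  have hs1 : ‖s‖ = 1 := by rcases hs with rfl | rfl <;> simp
  refine ⟨s, hs, ?_⟩
  rw [← Real.sqrt_sq (norm_nonneg (x - _)), ← Real.sqrt_sq (norm_nonneg (y - _)),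
    ← Real.sqrt_mul zero_le_two]
  refine Real.sqrt_le_sqrt ?_
  rw [norm_sub_sq_real, norm_sub_sq_real, norm_smul, norm_smul, real_inner_smul_right,
    real_inner_smul_right, real_inner_comm x y, hsχ, hx, hy, hs1, Real.norm_eq_abs]
  nlinarith [abs_nonneg χ, sq_abs χ]

end InnerProductSpace

section RankOnePerturbation

variable {ι E : Type*} [Fintype ι] [NormedAddCommGroup E] [InnerProductSpace ℝ E]

variable {T S : E →ₗ[ℝ] E} {e : OrthonormalBasis ι ℝ E} {L : ι → ℝ} {ρ : ℝ} {v : E}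

lemma abs_sub_le_of_apply_eq_add_rankOne {ι' : Type*} [Fintype ι'] (hS : S.IsSymmetric)
    {e' : OrthonormalBasis ι' ℝ E} {L' : ι' → ℝ} (he' : ∀ i, S (e' i) = L' i • e' i) {r : ℝ}
    (hL' : ∀ i, |L' i| ≤ r) (hST : ∀ x, S x = T x + (ρ * ⟪v, x⟫) • v) {lam : ℝ} {u : E}
    (hu : ‖u‖ = 1) (hTu : T u = lam • u) : |lam| - |ρ| * ‖v‖ ^ 2 ≤ r := by
  have hrayleigh : ⟪u, S u⟫ = lam + ρ * ⟪v, u⟫ ^ 2 := by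
    rw [hST, hTu, inner_add_right, real_inner_smul_right, real_inner_smul_right,
      real_inner_self_eq_norm_sq, hu, real_inner_comm u v]
    ring
  have hS_le : |⟪u, S u⟫| ≤ r := by simpa [hu] using abs_inner_apply_self_le hS he' hL' u
  have hvu : ⟪v, u⟫ ^ 2 ≤ ‖v‖ ^ 2 := by
    simpa [hu, sq_abs] using pow_le_pow_left₀ (abs_nonneg _) (abs_real_inner_le_norm v u) 2
  have hρ : |ρ * ⟪v, u⟫ ^ 2| ≤ |ρ| * ‖v‖ ^ 2 := by
    rw [abs_mul, abs_sq]; exact mul_le_mul_of_nonneg_left hvu (abs_nonneg ρ)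
  have htriangle := abs_add_le (lam + ρ * ⟪v, u⟫ ^ 2) (-(ρ * ⟪v, u⟫ ^ 2))
  rw [add_neg_cancel_right, abs_neg, ← hrayleigh] at htriangle
  linarith

lemma mul_norm_orthogonal_le_of_gap (hT : T.IsSymmetric) (he : ∀ i, T (e i) = L i • e i)
    {i₀ : ι} {Δ : ℝ} (hΔ : 0 < Δ) (hgap : ∀ i ≠ i₀, |L i| ≤ |L i₀| - Δ) {lam : ℝ} {u : E}
    (hu : ‖u‖ = 1) (hTu : T u = lam • u) (hlam : |L i₀| ≤ |lam|) {μ : ℝ} {y : E}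
    (hTy : T y + (ρ * ⟪v, y⟫) • v = μ • y) (hμ : |lam| - Δ / 4 ≤ |μ|) :
    3 * Δ / 4 * ‖y - ⟪u, y⟫ • u‖ ≤ |ρ| * |⟪v, y⟫| * ‖v‖ := by
  set w := y - ⟪u, y⟫ • u with hw
  have huw : ⟪u, w⟫ = 0 := by
    rw [inner_sub_right, real_inner_smul_right, real_inner_self_eq_norm_sq, hu]; ring
  have hu_coord : ∀ i ≠ i₀, ⟪e i, u⟫ = 0 := fun i hi =>
    inner_eigenbasis_eq_zero_of_apply_eq_smul hT he hTu fun h => by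
      have := hgap i hi; rw [h] at this; linarith
  have hw_coord :=
    inner_basis_eq_zero_of_inner_eq_zero (norm_ne_zero_iff.1 (by simp [hu])) hu_coord huw
  have hsep : ∀ i, ⟪e i, w⟫ ≠ 0 → 3 * Δ / 4 ≤ |L i - μ| := fun i hi => by
    have hi₀ : i ≠ i₀ := by rintro rfl; exact hi hw_coord
    linarith [hgap i hi₀, abs_sub_abs_le_abs_sub μ (L i), abs_sub_comm (L i) μ]
  have hz : T w - μ • w = (-(ρ * ⟪v, y⟫)) • v + (-(⟪u, y⟫ * (lam - μ))) • u := by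
    rw [hw, map_sub, map_smul, hTu, eq_sub_of_add_eq hTy]
    module
  have hzu : ⟪u, T w - μ • w⟫ = 0 := by
    rw [inner_sub_right, ← hT, hTu, real_inner_smul_left, real_inner_smul_right, huw]; ring
  calc 3 * Δ / 4 * ‖w‖ ≤ ‖T w - μ • w‖ := mul_norm_le_norm_apply_sub_smul hT he (by linarith) hsep
    _ ≤ ‖(-(ρ * ⟪v, y⟫)) • v‖ := norm_le_of_eq_add_smul_of_inner_eq_zero hz hzu
    _ = |ρ| * |⟪v, y⟫| * ‖v‖ := by rw [norm_smul, Real.norm_eq_abs, abs_neg, abs_mul]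

theorem norm_sub_inner_smul_le_of_gap (hT : T.IsSymmetric) (he : ∀ i, T (e i) = L i • e i)
    {i₀ : ι} {Δ : ℝ} (hΔ : 0 < Δ) (hgap : ∀ i ≠ i₀, |L i| ≤ |L i₀| - Δ) {lam : ℝ} {u : E}
    (hu : ‖u‖ = 1) (hTu : T u = lam • u) (hlam : |L i₀| ≤ |lam|) {μ : ℝ} {y : E}
    (hy : ‖y‖ = 1) (hTy : T y + (ρ * ⟪v, y⟫) • v = μ • y) (hμ : |lam| - Δ / 4 ≤ |μ|)
    (hsmall : |ρ| * ‖v‖ ^ 2 ≤ Δ / 4) :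
    ‖y - ⟪u, y⟫ • u‖ ≤ 2 * |ρ| * ‖v‖ * |⟪v, u⟫| / Δ := by
  set W := ‖y - ⟪u, y⟫ • u‖
  have hkey := mul_norm_orthogonal_le_of_gap hT he hΔ hgap hu hTu hlam hTy hμ
  have hβ : |⟪v, y⟫| ≤ |⟪v, u⟫| + ‖v‖ * W := by
    have hsplit : ⟪v, y⟫ = ⟪u, y⟫ * ⟪v, u⟫ + ⟪v, y - ⟪u, y⟫ • u⟫ := by
      rw [inner_sub_right, real_inner_smul_right]; ring
    have hχ : |⟪u, y⟫| ≤ 1 := by simpa [hu, hy] using abs_real_inner_le_norm u y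
    rw [hsplit]
    refine (abs_add_le _ _).trans (add_le_add ?_ (abs_real_inner_le_norm _ _))
    rw [abs_mul]
    exact mul_le_of_le_one_left (abs_nonneg _) hχ
  have hW : 0 ≤ W := norm_nonneg _
  have hρv : 0 ≤ |ρ| * ‖v‖ := by positivity
  rw [le_div_iff₀ hΔ]
  nlinarith [mul_le_mul_of_nonneg_left hβ hρv, mul_le_mul_of_nonneg_right hsmall hW]

end RankOnePerturbation

lemma eucNorm_eq_norm {k : ℕ} (x : Fin k → ℝ) : eucNorm x = ‖toLp 2 x‖ := by
  simp [eucNorm, EuclideanSpace.norm_eq]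

lemma sum_mul_eq_inner_toLp {ι : Type*} [Fintype ι] (x y : ι → ℝ) :
    ∑ i, x i * y i = ⟪toLp 2 x, toLp 2 y⟫ := by
  rw [real_inner_comm]; rfl

namespace Matrix

variable {ι : Type*} [Fintype ι] [DecidableEq ι]

omit [Fintype ι] [DecidableEq ι] in
lemma isHermitian_vecMulVec_self (b : ι → ℝ) : (vecMulVec b b).IsHermitian := by
  rw [IsHermitian, conjTranspose_vecMulVec, star_trivial]

lemma toEuclideanLin_add_smul_vecMulVec (A : Matrix ι ι ℝ) (ρ : ℝ) (b : ι → ℝ)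
    (x : EuclideanSpace ℝ ι) :
    (A + ρ • vecMulVec b b).toEuclideanLin x
      = A.toEuclideanLin x + (ρ * ⟪toLp 2 b, x⟫) • toLp 2 b := by
  simp only [toLpLin_apply, add_mulVec, smul_mulVec, vecMulVec_mulVec, WithLp.toLp_add,
    WithLp.toLp_smul, op_smul_eq_smul, smul_smul, EuclideanSpace.inner_eq_star_dotProduct,
    star_trivial, dotProduct_comm b]

namespace IsHermitian

variable {A : Matrix ι ι ℝ} (hA : A.IsHermitian)
include hA

lemma toEuclideanLin_eigenvectorBasis (i : ι) :
    A.toEuclideanLin (hA.eigenvectorBasis i) = hA.eigenvalues i • hA.eigenvectorBasis i :=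
  congrArg (toLp 2) (hA.mulVec_eigenvectorBasis i)

lemma abs_eigenvalues_le {r : ℝ}
    (h : ∀ μ : ℝ, (∃ w : ι → ℝ, w ≠ 0 ∧ A *ᵥ w = μ • w) → |μ| ≤ r) (i : ι) :
    |hA.eigenvalues i| ≤ r :=
  h _ ⟨_, fun h0 => hA.eigenvectorBasis.orthonormal.ne_zero i (by simpa using congrArg (toLp 2) h0),
    hA.mulVec_eigenvectorBasis i⟩

end IsHermitian

end Matrix

theorem stmt_15_general {n : ℕ} (A : Matrix (Fin n) (Fin n) ℝ) (hA : A.IsHermitian)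
    (ρ : ℝ) (b : Fin n → ℝ) (lam : ℝ) (u₁ : Fin n → ℝ)
    (hu₁ : eucNorm u₁ = 1) (heig : A.mulVec u₁ = lam • u₁)
    (hlead : ∀ μ' : ℝ, (∃ w : Fin n → ℝ, w ≠ 0 ∧ A.mulVec w = μ' • w) → |μ'| ≤ |lam|)
    (i₀ : Fin n)
    (Δ : ℝ)
    (hΔ : Δ = |hA.eigenvalues i₀| - ⨆ i : {i : Fin n // i ≠ i₀}, |hA.eigenvalues i.1|)
    (hΔpos : 0 < Δ)
    (hsmall : |ρ| * eucNorm b ^ 2 ≤ Δ / 4)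
    (ut : Fin n → ℝ) (hut : IsLeadingEigen (A + ρ • Matrix.vecMulVec b b) ut) :
    ∃ s : ℝ, (s = 1 ∨ s = -1) ∧
      eucNorm (u₁ - s • ut)
        ≤ 2 * Real.sqrt 2 * (|ρ| * eucNorm b * |∑ i, b i * u₁ i|) / Δ := by
  obtain ⟨hut₁, μ, hμ, hμlead⟩ := hut
  have hM : (A + ρ • vecMulVec b b).IsHermitian :=
    hA.add ((isHermitian_vecMulVec_self b).smul (.all ρ))
  have hgap : ∀ i ≠ i₀, |hA.eigenvalues i| ≤ |hA.eigenvalues i₀| - Δ := fun i hi => by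
    have := le_ciSup (Set.finite_range fun j : {j // j ≠ i₀} => |hA.eigenvalues j.1|).bddAbove
      ⟨i, hi⟩
    rw [hΔ]; linarith
  rw [eucNorm_eq_norm] at hu₁ hut₁ hsmall ⊢
  rw [sum_mul_eq_inner_toLp]
  have hTu : A.toEuclideanLin (toLp 2 u₁) = lam • toLp 2 u₁ := congrArg (toLp 2) heig
  have hTy : A.toEuclideanLin (toLp 2 ut) + (ρ * ⟪toLp 2 b, toLp 2 ut⟫) • toLp 2 b
      = μ • toLp 2 ut := by
    rw [← toEuclideanLin_add_smul_vecMulVec]; exact congrArg (toLp 2) hμ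
  have hμ_ge : |lam| - Δ / 4 ≤ |μ| := by
    have := abs_sub_le_of_apply_eq_add_rankOne (isSymmetric_toEuclideanLin_iff.2 hM)
      hM.toEuclideanLin_eigenvectorBasis (hM.abs_eigenvalues_le hμlead)
      (toEuclideanLin_add_smul_vecMulVec A ρ b) hu₁ hTu
    linarith
  have hW := norm_sub_inner_smul_le_of_gap (isSymmetric_toEuclideanLin_iff.2 hA)
    hA.toEuclideanLin_eigenvectorBasis hΔpos hgap hu₁ hTu (hA.abs_eigenvalues_le hlead i₀) hut₁
    hTy hμ_ge hsmall
  obtain ⟨s, hs, hsign⟩ := exists_sign_norm_sub_le hu₁ hut₁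
  refine ⟨s, hs, ?_⟩
  rw [eucNorm_eq_norm, toLp_sub, toLp_smul]
  calc _ ≤ √2 * _ := hsign
    _ ≤ √2 * (2 * |ρ| * ‖toLp 2 b‖ * |⟪toLp 2 b, toLp 2 u₁⟫| / Δ) := by gcongr
    _ = _ := by ring

/-- eigenvector perturbation under a rank-one update: let `A` be symmetric
with leading eigenpair `(λ₁, u₁)` (so `|λ₁|` is maximal among all eigenvalues), and let
`Δ = |λ_{i₀}| - max_{i ≠ i₀} |λ_i| > 0` be the gap between the largest and second largest
singular values of `A` (listing the eigenvalues of `A` with multiplicity as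
`hA.eigenvalues`, with `i₀` an index attaining the maximum of `|λ_i|`). If
`|ρ| ‖b‖² ≤ Δ/4` and `ũ₁` is a unit leading eigenvector of `A + ρ b bᵀ`, then up to a sign
`s ∈ {±1}`, `‖u₁ - s ũ₁‖ ≤ 2√2 |ρ| ‖b‖ |bᵀu₁| / Δ`. -/
theorem stmt_15 {n : ℕ} (A : Matrix (Fin n) (Fin n) ℝ) (hA : A.IsHermitian)
    (ρ : ℝ) (b : Fin n → ℝ) (lam : ℝ) (u₁ : Fin n → ℝ)
    (hu₁ : eucNorm u₁ = 1) (heig : A.mulVec u₁ = lam • u₁)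
    (hlead : ∀ μ' : ℝ, (∃ w : Fin n → ℝ, w ≠ 0 ∧ A.mulVec w = μ' • w) → |μ'| ≤ |lam|)
    (i₀ : Fin n) (hi₀ : ∀ i, |hA.eigenvalues i| ≤ |hA.eigenvalues i₀|)
    (Δ : ℝ)
    (hΔ : Δ = |hA.eigenvalues i₀| - ⨆ i : {i : Fin n // i ≠ i₀}, |hA.eigenvalues i.1|)
    (hΔpos : 0 < Δ)
    (hsmall : |ρ| * eucNorm b ^ 2 ≤ Δ / 4)
    (ut : Fin n → ℝ) (hut : IsLeadingEigen (A + ρ • Matrix.vecMulVec b b) ut) :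
    ∃ s : ℝ, (s = 1 ∨ s = -1) ∧
      eucNorm (u₁ - s • ut)
        ≤ 2 * Real.sqrt 2 * (|ρ| * eucNorm b * |∑ i, b i * u₁ i|) / Δ :=
  stmt_15_general A hA ρ b lam u₁ hu₁ heig hlead i₀ Δ hΔ hΔpos hsmall ut hut
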